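/- Let G be a distribution function with 1 − G(x) ~ C_α σ^α x^{−α} as x → ∞, where C_α, σ, α > 0. Then the quantile function satisfies G^{−1}(1 − s) ~ σ (C_α / s)^{1/α} as s ↓ 0; consequently, if Z_{n−k:n} / G^{−1}(1 − k/n) → 1 in probability, then Z_{n−k:n} (k π / (2 n Γ(α) sin(πα/2)))^{1/α} → σ in probability, using C_α = (2/π) Γ(α) sin(πα/2). -/
import Mathlib
set_option maxHeartbeats 1000000


open MeasureTheory Filter Real

/-- If `1 - G(x) ~ C_α σ^α x^(-α)` with `C_α = (2/π) Γ(α) sin(πα/2)`, then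
`G⁻¹(1-s) ~ σ (C_α/s)^(1/α)` as `s ↓ 0`; consequently, if `Z_{n-k:n}/G⁻¹(1 - k/n) → 1` in
probability, then `Z_{n-k:n} (kπ/(2nΓ(α)sin(πα/2)))^(1/α) → σ` in probability. -/
theorem scale_estimator_consistency
    {Ω : Type*} [MeasurableSpace Ω] (P : Measure Ω) [IsProbabilityMeasure P]
    (G : ℝ → ℝ) (hmono : Monotone G) (hGlt : ∀ x : ℝ, G x < 1)
    (hGtop : Tendsto G atTop (nhds 1))
    (α σ : ℝ) (hα0 : 0 < α) (hα2 : α < 2) (hσ : 0 < σ)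
    (htail : Tendsto
      (fun x : ℝ =>
        (1 - G x) / ((2 / π * Real.Gamma α * Real.sin (π * α / 2)) * σ ^ α * x ^ (-α)))
      atTop (nhds 1))
    (T : ℕ → Ω → ℝ) (hT : ∀ n, Measurable (T n))
    (k : ℕ → ℕ) (hk : Tendsto k atTop atTop)
    (hkn : Tendsto (fun n : ℕ => (k n : ℝ) / n) atTop (nhds 0))
    (hconv : ∀ ε : ℝ, 0 < ε →
      Tendsto
        (fun n : ℕ =>
          (P {ω | |T n ω / sInf {x : ℝ | 1 - (k n : ℝ) / n ≤ G x} - 1| > ε}).toReal)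
        atTop (nhds 0)) :
    Tendsto
        (fun s : ℝ =>
          sInf {x : ℝ | 1 - s ≤ G x} / (σ * ((2 / π * Real.Gamma α * Real.sin (π * α / 2)) / s) ^ (1 / α)))
        (nhdsWithin 0 (Set.Ioi 0)) (nhds 1) ∧
      ∀ ε : ℝ, 0 < ε →
        Tendsto
          (fun n : ℕ =>
            (P {ω | |T n ω * ((k n : ℝ) * π
                / (2 * n * Real.Gamma α * Real.sin (π * α / 2))) ^ (1 / α) - σ| > ε}).toReal)
          atTop (nhds 0) := by
  have hπ : (0:ℝ) < π := Real.pi_pos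
  have hsin : 0 < Real.sin (π * α / 2) :=
    Real.sin_pos_of_pos_of_lt_pi (by positivity) (by nlinarith)
  have hΓ : 0 < Real.Gamma α := Real.Gamma_pos_of_pos hα0
  set C : ℝ := 2 / π * Real.Gamma α * Real.sin (π * α / 2) with hCdef
  have hC : 0 < C := by positivity
  set Q : ℝ → ℝ := fun s => sInf {x : ℝ | 1 - s ≤ G x} with hQdef
  set q : ℝ → ℝ := fun s => σ * (C / s) ^ (1 / α) with hqdef
  have hα0' : α ≠ 0 := ne_of_gt hα0
  -- q tends to infinity as s → 0⁺
  have hqtop : Tendsto q (nhdsWithin 0 (Set.Ioi 0)) atTop := by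
    have h1 : Tendsto (fun s : ℝ => C / s) (nhdsWithin 0 (Set.Ioi 0)) atTop := by
      simpa [div_eq_mul_inv] using tendsto_inv_nhdsGT_zero.const_mul_atTop hC
    exact (((tendsto_rpow_atTop (by positivity : (0:ℝ) < 1/α)).comp h1).const_mul_atTop hσ)
  -- positivity of q
  have hqpos : ∀ s : ℝ, 0 < s → 0 < q s := fun s hs => by
    have : 0 < C / s := div_pos hC hs
    positivity
  -- key identity: C σ^α (t * q s)^(-α) = t^(-α) * s
  have hkey : ∀ s t : ℝ, 0 < s → 0 < t →
      C * σ ^ α * (t * q s) ^ (-α) = t ^ (-α) * s := by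
    intro s t hs ht
    have hCs : (0:ℝ) ≤ C / s := le_of_lt (div_pos hC hs)
    have hq' : (0:ℝ) ≤ (C / s) ^ (1/α) := Real.rpow_nonneg hCs _
    rw [hqdef]
    rw [Real.mul_rpow (le_of_lt ht) (by positivity), Real.mul_rpow (le_of_lt hσ) hq',
      ← Real.rpow_mul hCs]
    have h1 : 1 / α * -α = -1 := by field_simp
    rw [h1, Real.rpow_neg_one, Real.rpow_neg (le_of_lt hσ)]
    have hσα : (0:ℝ) < σ ^ α := Real.rpow_pos_of_pos hσ α
    field_simp
  -- main quantile asymptotics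
  have hmain : Tendsto (fun s => Q s / q s) (nhdsWithin 0 (Set.Ioi 0)) (nhds 1) := by
    rw [Metric.tendsto_nhds]
    intro ε hε
    set ε₁ : ℝ := min (ε / 2) (1 / 2) with hε₁def
    have hε₁pos : 0 < ε₁ := lt_min (by linarith) (by norm_num)
    have hε₁lt1 : ε₁ < 1 := lt_of_le_of_lt (min_le_right _ _) (by norm_num)
    have hε₁ltε : ε₁ < ε := lt_of_le_of_lt (min_le_left _ _) (by linarith)
    -- choose δ
    have hA : 1 < (1 + ε₁) ^ α :=
      (Real.one_lt_rpow_iff_of_pos (by linarith)).2 (Or.inl ⟨by linarith, hα0⟩)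
    have hB : (1 - ε₁) ^ α < 1 := Real.rpow_lt_one (by linarith) (by linarith) hα0
    set δ : ℝ := min ((1 + ε₁) ^ α - 1) ((1 - (1 - ε₁) ^ α) / 2) with hδdef
    have hδpos : 0 < δ := lt_min (by linarith) (by linarith)
    have hδ1 : 1 + δ ≤ (1 + ε₁) ^ α := by
      have := min_le_left ((1 + ε₁) ^ α - 1) ((1 - (1 - ε₁) ^ α) / 2)
      linarith [this]
    have hδ2 : (1 - ε₁) ^ α < 1 - δ := by
      have := min_le_right ((1 + ε₁) ^ α - 1) ((1 - (1 - ε₁) ^ α) / 2)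
      linarith [this]
    -- tail bound
    have htail' := (Metric.tendsto_nhds.1 htail) δ hδpos
    rw [eventually_atTop] at htail'
    obtain ⟨X, hX⟩ := htail'
    set X₀ : ℝ := max X 1 with hX₀def
    have hX₀pos : (0:ℝ) < X₀ := lt_of_lt_of_le one_pos (le_max_right _ _)
    -- eventually, (1-ε₁) q s ≥ X₀
    have hev1 : ∀ᶠ s in nhdsWithin (0:ℝ) (Set.Ioi 0), X₀ ≤ (1 - ε₁) * q s :=
      (hqtop.const_mul_atTop (by linarith : (0:ℝ) < 1 - ε₁)).eventually_ge_atTop X₀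
    filter_upwards [hev1, self_mem_nhdsWithin] with s hs1 hs2
    have hs : (0:ℝ) < s := hs2
    have hq : 0 < q s := hqpos s hs
    -- tail bounds for x ≥ X₀
    have hf : ∀ x : ℝ, 0 < x → 0 < C * σ ^ α * x ^ (-α) := by
      intro x hx
      have := Real.rpow_pos_of_pos hx (-α)
      have := Real.rpow_pos_of_pos hσ α
      positivity
    have htb : ∀ x : ℝ, X₀ ≤ x →
        (1 - δ) * (C * σ ^ α * x ^ (-α)) < 1 - G x ∧
        1 - G x < (1 + δ) * (C * σ ^ α * x ^ (-α)) := by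
      intro x hx
      have hx0 : 0 < x := lt_of_lt_of_le hX₀pos hx
      have hfx := hf x hx0
      have h := hX x (le_trans (le_max_left _ _) hx)
      rw [Real.dist_eq, abs_lt] at h
      constructor
      · have : 1 - δ < (1 - G x) / (C * σ ^ α * x ^ (-α)) := by linarith [h.1]
        calc (1 - δ) * (C * σ ^ α * x ^ (-α))
            < ((1 - G x) / (C * σ ^ α * x ^ (-α))) * (C * σ ^ α * x ^ (-α)) := by
              exact mul_lt_mul_of_pos_right this hfx
          _ = 1 - G x := div_mul_cancel₀ _ (ne_of_gt hfx)
      · have : (1 - G x) / (C * σ ^ α * x ^ (-α)) < 1 + δ := by linarith [h.2]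
        calc 1 - G x = ((1 - G x) / (C * σ ^ α * x ^ (-α))) * (C * σ ^ α * x ^ (-α)) :=
              (div_mul_cancel₀ _ (ne_of_gt hfx)).symm
          _ < (1 + δ) * (C * σ ^ α * x ^ (-α)) := mul_lt_mul_of_pos_right this hfx
    set a : ℝ := (1 - ε₁) * q s with hadef
    set b : ℝ := (1 + ε₁) * q s with hbdef
    have hab : a ≤ b := by nlinarith
    have hbX : X₀ ≤ b := le_trans hs1 hab
    -- b is in the set
    have hfb : C * σ ^ α * b ^ (-α) = (1 + ε₁) ^ (-α) * s := hkey s (1 + ε₁) hs (by linarith)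
    have hbmem : b ∈ {x : ℝ | 1 - s ≤ G x} := by
      have h2 := (htb b hbX).2
      rw [hfb] at h2
      have h3 : (1 + δ) * ((1 + ε₁) ^ (-α) * s) ≤ s := by
        have hpow : (0:ℝ) < (1 + ε₁) ^ α := by positivity
        rw [Real.rpow_neg (by linarith : (0:ℝ) ≤ 1 + ε₁)]
        rw [mul_comm ((1+ε₁)^α)⁻¹ s, ← mul_assoc]
        have : (1 + δ) * ((1 + ε₁) ^ α)⁻¹ ≤ 1 := by
          rw [mul_inv_le_iff₀ hpow]; linarith
        nlinarith
      have : 1 - G b ≤ s := le_of_lt (lt_of_lt_of_le h2 h3)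
      simpa [Set.mem_setOf_eq] using by linarith
    -- a is a lower bound of the set
    have hfa : C * σ ^ α * a ^ (-α) = (1 - ε₁) ^ (-α) * s := hkey s (1 - ε₁) hs (by linarith)
    have hGa : G a < 1 - s := by
      have h1 := (htb a hs1).1
      rw [hfa] at h1
      have h3 : s < (1 - δ) * ((1 - ε₁) ^ (-α) * s) := by
        have hpow : (0:ℝ) < (1 - ε₁) ^ α := Real.rpow_pos_of_pos (by linarith) α
        rw [Real.rpow_neg (by linarith : (0:ℝ) ≤ 1 - ε₁)]
        rw [mul_comm ((1-ε₁)^α)⁻¹ s, ← mul_assoc]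
        have : 1 < (1 - δ) * ((1 - ε₁) ^ α)⁻¹ := by
          rw [lt_mul_inv_iff₀ hpow]; linarith
        nlinarith
      linarith
    have hlb : ∀ y ∈ {x : ℝ | 1 - s ≤ G x}, a ≤ y := by
      intro y hy
      by_contra hya
      push_neg at hya
      have := hmono (le_of_lt hya)
      have : 1 - s ≤ G a := le_trans hy this
      linarith
    have hbdd : BddBelow {x : ℝ | 1 - s ≤ G x} := ⟨a, hlb⟩
    have hQle : Q s ≤ b := csInf_le hbdd hbmem
    have hQge : a ≤ Q s := le_csInf ⟨b, hbmem⟩ hlb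
    rw [Real.dist_eq]
    have h1 : Q s / q s ≤ 1 + ε₁ := by
      rw [div_le_iff₀ hq]; simpa [hbdef] using hQle
    have h2 : 1 - ε₁ ≤ Q s / q s := by
      rw [le_div_iff₀ hq]; simpa [hadef] using hQge
    have : |Q s / q s - 1| ≤ ε₁ := abs_le.2 ⟨by linarith, by linarith⟩
    linarith
  refine ⟨hmain, ?_⟩
  -- part 2
  set s : ℕ → ℝ := fun n => (k n : ℝ) / n with hsdef
  have hspos : ∀ᶠ n in atTop, 0 < s n := by
    filter_upwards [hk.eventually_ge_atTop 1, eventually_ge_atTop 1] with n h1 h2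
    have : (0:ℝ) < (k n : ℝ) := by exact_mod_cast Nat.lt_of_lt_of_le Nat.zero_lt_one h1
    have hn : (0:ℝ) < (n : ℝ) := by exact_mod_cast h2
    positivity
  have hstend : Tendsto s atTop (nhdsWithin 0 (Set.Ioi 0)) :=
    tendsto_nhdsWithin_iff.2 ⟨hkn, hspos⟩
  have hr : Tendsto (fun n => Q (s n) / q (s n)) atTop (nhds 1) := hmain.comp hstend
  -- the deterministic scaling factor
  set c : ℕ → ℝ := fun n =>
    ((k n : ℝ) * π / (2 * n * Real.Gamma α * Real.sin (π * α / 2))) ^ (1 / α) with hcdef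
  have hcs : ∀ᶠ n in atTop, c n = (s n / C) ^ (1 / α) := by
    filter_upwards [eventually_ge_atTop 1] with n hn
    have hn0 : (n : ℝ) ≠ 0 := by positivity
    have : (k n : ℝ) * π / (2 * n * Real.Gamma α * Real.sin (π * α / 2)) = s n / C := by
      have hπ0 : π ≠ 0 := ne_of_gt hπ
      have hΓ0 : Real.Gamma α ≠ 0 := ne_of_gt hΓ
      have hs0 : Real.sin (π * α / 2) ≠ 0 := ne_of_gt hsin
      rw [hsdef, hCdef]
      show (k n : ℝ) * π / (2 * n * Real.Gamma α * Real.sin (π * α / 2)) =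
        (k n : ℝ) / n / (2 / π * Real.Gamma α * Real.sin (π * α / 2))
      rw [div_eq_div_iff (by positivity) (by positivity)]
      field_simp
    exact congrArg (fun x : ℝ => x ^ (1 / α)) this
  have hqc : ∀ n, 0 < s n → q (s n) * (s n / C) ^ (1 / α) = σ := by
    intro n hn
    rw [hqdef]
    have h1 : (0:ℝ) ≤ C / s n := le_of_lt (div_pos hC hn)
    have h2 : (0:ℝ) ≤ s n / C := le_of_lt (div_pos hn hC)
    rw [mul_assoc, ← Real.mul_rpow h1 h2]
    have : C / s n * (s n / C) = 1 := by field_simp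
    rw [this, Real.one_rpow, mul_one]
  have ha : Tendsto (fun n => Q (s n) * c n) atTop (nhds σ) := by
    have heq : ∀ᶠ n in atTop, (Q (s n) / q (s n)) * σ = Q (s n) * c n := by
      filter_upwards [hspos, hcs] with n h1 h2
      have hq := hqpos _ h1
      rw [h2, ← hqc n h1]
      field_simp
    have : Tendsto (fun n => (Q (s n) / q (s n)) * σ) atTop (nhds (1 * σ)) :=
      hr.mul_const σ
    rw [one_mul] at this
    exact this.congr' heq
  have hQne : ∀ᶠ n in atTop, Q (s n) ≠ 0 := by
    have h12 : ∀ᶠ n in atTop, (1:ℝ)/2 < Q (s n) / q (s n) :=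
      hr.eventually_const_lt (by norm_num)
    filter_upwards [h12, hspos] with n h1 h2
    have hq := hqpos _ h2
    intro h0
    rw [h0, zero_div] at h1
    linarith
  intro ε hε
  set ε' : ℝ := ε / (4 * σ) with hε'def
  have hε' : 0 < ε' := by positivity
  have hbound : ∀ᶠ n in atTop,
      (P {ω | |T n ω * c n - σ| > ε}).toReal ≤
      (P {ω | |T n ω / Q (s n) - 1| > ε'}).toReal := by
    filter_upwards [ha.eventually (Metric.ball_mem_nhds σ (by linarith : 0 < ε/2)),
      ha.eventually (Metric.ball_mem_nhds σ hσ), hQne] with n hn1 hn2 hn3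
    rw [Real.dist_eq] at hn1 hn2
    have habs : |Q (s n) * c n| ≤ 2 * σ := by
      rw [abs_le]; constructor <;> [skip; skip] <;> cases abs_lt.1 hn2 with
      | intro hl hr => linarith
    apply ENNReal.toReal_mono (measure_ne_top P _)
    apply measure_mono
    intro ω hω
    simp only [Set.mem_setOf_eq] at hω ⊢
    by_contra hcon
    push_neg at hcon
    -- |T/Q - 1| ≤ ε', derive |T c - σ| ≤ ε
    have hTc : T n ω * c n = (T n ω / Q (s n)) * (Q (s n) * c n) := by
      field_simp
    have : |T n ω * c n - σ| ≤ ε := by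
      rw [hTc]
      have h1 : |T n ω / Q (s n) * (Q (s n) * c n) - σ| ≤
          |(T n ω / Q (s n) - 1) * (Q (s n) * c n)| + |Q (s n) * c n - σ| := by
        have : T n ω / Q (s n) * (Q (s n) * c n) - σ =
            (T n ω / Q (s n) - 1) * (Q (s n) * c n) + (Q (s n) * c n - σ) := by ring
        rw [this]; exact abs_add_le _ _
      have h2 : |(T n ω / Q (s n) - 1) * (Q (s n) * c n)| ≤ ε' * (2 * σ) := by
        rw [abs_mul]
        exact mul_le_mul hcon habs (abs_nonneg _) (le_of_lt hε')
      have h3 : ε' * (2 * σ) = ε / 2 := by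
        rw [hε'def]; field_simp; ring
      linarith [le_of_lt hn1]
    linarith
  have hnonneg : ∀ᶠ n in atTop, 0 ≤ (P {ω | |T n ω * c n - σ| > ε}).toReal :=
    Eventually.of_forall fun n => ENNReal.toReal_nonneg
  exact squeeze_zero' hnonneg hbound (hconv ε' hε')
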